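/- arXiv:1909.03478 — 2 statements merged into one kernel-verified Lean document; each statement's English description precedes it below -/
import Mathlib

section
/- Under the same hypotheses (φ_{π,u} = φ_{π',u'}, π ≠ π', branching vertex w_j with π'(w_j) ≥ π(w_j)), the vertex w_{j+1} exists on the path P_π(u) (i.e. k ≥ j+1) and π'(w_{j+1}) = π(w_j). -/
open scoped Classical

variable {V : Type*}

/-- The lexicographically first maximal independent set under ranking `π`:
`v` is in the LFMIS iff no neighbor of strictly smaller rank is in the LFMIS. -/
noncomputable def lfmis [Fintype V] (G : SimpleGraph V) (π : V → ℝ) : V → Prop :=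
  fun v => ∀ u, G.Adj u v → π u < π v → ¬ lfmis G π u
termination_by v => (Finset.univ.filter fun u => π u < π v).card
decreasing_by
  rename_i u _ hlt
  apply Finset.card_lt_card
  constructor
  · intro w hw
    simp only [Finset.mem_filter, Finset.mem_univ, true_and] at hw ⊢
    exact hw.trans hlt
  · intro hsub
    have := hsub (Finset.mem_filter.mpr ⟨Finset.mem_univ u, hlt⟩)
    simp only [Finset.mem_filter, Finset.mem_univ, true_and] at this
    exact lt_irrefl _ this

/-- The eliminator of `v`: the minimum-rank vertex of `(N(v) ∪ {v}) ∩ LFMIS(G, π)`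
(when it exists; otherwise `v` by convention). -/
noncomputable def eliminator [Fintype V] (G : SimpleGraph V) (π : V → ℝ) (v : V) : V :=
  if h : ∃ e, (e = v ∨ G.Adj e v) ∧ lfmis G π e ∧
      ∀ u, (u = v ∨ G.Adj u v) → lfmis G π u → π e ≤ π u
  then h.choose else v

/-- The graph obtained from `G` by deleting the vertex `v` (making it isolated). -/
def delV (G : SimpleGraph V) (v : V) : SimpleGraph V where
  Adj a b := G.Adj a b ∧ a ≠ v ∧ b ≠ v
  symm := ⟨fun a b h => ⟨h.1.symm, h.2.2, h.2.1⟩⟩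
  loopless := ⟨fun a h => G.loopless.irrefl a h.1⟩

/-- `u` is flipped (for the deletion of `v` from `G`): it belongs to exactly one of
`LFMIS(G, π)` and `LFMIS(G \ v, π)`; the deleted vertex `v` itself is flipped iff
it belongs to `LFMIS(G, π)`. -/
noncomputable def flippedDel [Fintype V] (G : SimpleGraph V) (π : V → ℝ) (v u : V) : Prop :=
  if u = v then lfmis G π v else ¬ (lfmis G π u ↔ lfmis (delV G v) π u)

/-- `u` is affected (for the deletion of `v` from `G`): its eliminator differs
between `G` and `G \ v`; the deleted vertex `v` itself is affected iff its status
changes, i.e. iff `v ∈ LFMIS(G, π)`. -/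
noncomputable def affectedDel [Fintype V] (G : SimpleGraph V) (π : V → ℝ) (v u : V) : Prop :=
  if u = v then lfmis G π v else eliminator G π u ≠ eliminator (delV G v) π u

/-- `p` is the parent of `u` (for the deletion of `v` from `G`): `p` is the
minimum-rank flipped neighbor of `u`. -/
noncomputable def isParent [Fintype V] (G : SimpleGraph V) (π : V → ℝ) (v p u : V) : Prop :=
  G.Adj p u ∧ flippedDel G π v p ∧ π p < π u ∧
    ∀ w, G.Adj w u → flippedDel G π v w → π p ≤ π w

/-- `l` is the propagation path of the affected vertex `u` (for the deletion of
`v` from `G`): it starts at `v`, ends at `u`, and each vertex is the parent of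
the next. -/
noncomputable def isPropPath [Fintype V] (G : SimpleGraph V) (π : V → ℝ) (v : V)
    (l : List V) (u : V) : Prop :=
  l ≠ [] ∧ l.head? = some v ∧ l.getLast? = some u ∧ affectedDel G π v u ∧
    ∀ i (h : i + 1 < l.length),
      isParent G π v (l[i]'(Nat.lt_of_succ_lt h)) (l[i + 1]'h)

/-- The permutation `φ_{π,l}` obtained from `π` by cyclically rotating the ranks
along the path `l` towards its last vertex: the first vertex of `l` gets the rank
of the last, every later vertex of `l` gets the rank of its predecessor, and all
vertices off `l` keep their rank. -/
noncomputable def rotateAlong [DecidableEq V] (π : V → ℝ) (l : List V) : V → ℝ :=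
  fun x =>
    if hx : x ∈ l then
      if l.idxOf x = 0 then π (l.getLast (List.ne_nil_of_mem hx))
      else π (l[l.idxOf x - 1]'(by
        have := List.idxOf_lt_length_iff.mpr hx
        omega))
    else π x

lemma gei {α} {l : List α} {i i' : ℕ} (h : i = i') (hi : i < l.length) :
    l[i]'hi = l[i']'(h ▸ hi) := by subst h; rfl

lemma rot_off [DecidableEq V] (π : V → ℝ) (l : List V) (x : V) (hx : x ∉ l) :
    rotateAlong π l x = π x := dif_neg hx

lemma rot_mem [DecidableEq V] (π : V → ℝ) (l : List V) (nd : l.Nodup)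
    (i : ℕ) (h : i < l.length) (hi : i ≠ 0) :
    rotateAlong π l (l[i]'h) = π (l[i-1]'(by omega)) := by
  have hm : l[i]'h ∈ l := List.getElem_mem h
  have hidx : l.idxOf (l[i]'h) = i := nd.idxOf_getElem i h
  simp only [rotateAlong, dif_pos hm, hidx, if_neg hi]

lemma rot_zero [DecidableEq V] (π : V → ℝ) (l : List V) (nd : l.Nodup)
    (h : 0 < l.length) :
    rotateAlong π l (l[0]'h) = π (l[l.length - 1]'(by omega)) := by
  have hm : l[0]'h ∈ l := List.getElem_mem h
  have hidx : l.idxOf (l[0]'h) = 0 := nd.idxOf_getElem 0 h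
  simp only [rotateAlong, dif_pos hm, hidx, if_pos rfl, if_true]
  rw [List.getLast_eq_getElem]

lemma lt_of_chain {g : ℕ → ℝ} {n : ℕ} (h : ∀ i, i + 1 < n → g i < g (i+1)) :
    ∀ i i', i < i' → i' < n → g i < g i' := by
  intro i i' hii hi'
  induction i' with
  | zero => omega
  | succ k ih =>
    rcases Nat.lt_or_ge i k with h1 | h2
    · exact lt_trans (ih h1 (by omega)) (h k hi')
    · have : i = k := by omega
      subst this; exact h i hi'

lemma path_mono (π : V → ℝ) (l : List V) (v₀ : V)
    (step : ∀ i (h : i + 1 < l.length), π (l[i]'(by omega)) < π (l[i+1]'h)) :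
    ∀ i i' (hii : i < i') (h : i' < l.length), π (l[i]'(by omega)) < π (l[i']'h) := by
  intro i i' hii h
  have key := lt_of_chain (g := fun m => π (l.getD m v₀)) (n := l.length)
    (fun m hm => by
      show π (l.getD m v₀) < π (l.getD (m+1) v₀)
      rw [List.getD_eq_getElem l v₀ (by omega : m < l.length),
        List.getD_eq_getElem l v₀ hm]
      exact step m hm) i i' hii h
  rwa [List.getD_eq_getElem l v₀ (by omega : i < l.length),
    List.getD_eq_getElem l v₀ h] at key

lemma path_nodup (π : V → ℝ) (l : List V) (v₀ : V)
    (step : ∀ i (h : i + 1 < l.length), π (l[i]'(by omega)) < π (l[i+1]'h)) :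
    l.Nodup := by
  rw [List.nodup_iff_injective_get]
  rintro ⟨i, hi⟩ ⟨i', hi'⟩ hh
  simp only [List.get_eq_getElem] at hh
  rcases lt_trichotomy i i' with h1 | h2 | h3
  · have := path_mono π l v₀ step i i' h1 hi'
    rw [hh] at this; exact absurd this (lt_irrefl _)
  · simp [h2]
  · have := path_mono π l v₀ step i' i h3 hi
    rw [hh] at this; exact absurd this (lt_irrefl _)

/-- Under the same hypotheses as the structural claim about equal rotations
(`φ_{π,u} = φ_{π',u'}`, `π ≠ π'`, branching index `j` with `π (w_j) ≤ π' (w_j)`),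
the vertex `w_{j+1}` exists on the path `P_π(u)` (i.e. `j + 1 < k`) and
`π' (w_{j+1}) = π (w_j)`. -/
theorem equal_rotations_next_vertex [Fintype V] [DecidableEq V] (G : SimpleGraph V)
    (π π' : V → ℝ) (hπ : Function.Injective π) (hπ' : Function.Injective π')
    (hne : π ≠ π') (v u u' : V) (l l' : List V)
    (hl : isPropPath G π v l u) (hl' : isPropPath G π' v l' u')
    (j : ℕ) (hjl : j < l.length) (hjl' : j < l'.length)
    (hpref : ∀ i, i ≤ j → l[i]? = l'[i]?)
    (hmax : ∀ (h1 : j + 1 < l.length) (h2 : j + 1 < l'.length),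
      l[j + 1]'h1 ≠ l'[j + 1]'h2)
    (hrank : π (l[j]'hjl) ≤ π' (l[j]'hjl))
    (heq : rotateAlong π l = rotateAlong π' l') :
    ∃ h : j + 1 < l.length, π' (l[j + 1]'h) = π (l[j]'hjl) := by
  obtain ⟨hne0, hhead, -, -, hpar⟩ := hl
  obtain ⟨hne0', hhead', -, -, hpar'⟩ := hl'
  have step : ∀ i (h : i + 1 < l.length),
      π (l[i]'(Nat.lt_of_succ_lt h)) < π (l[i + 1]'h) :=
    fun i h => (hpar i h).2.2.1
  have step' : ∀ i (h : i + 1 < l'.length),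
      π' (l'[i]'(Nat.lt_of_succ_lt h)) < π' (l'[i + 1]'h) :=
    fun i h => (hpar' i h).2.2.1
  have nd : l.Nodup := path_nodup π l v step
  have nd' : l'.Nodup := path_nodup π' l' v step'
  have mono := path_mono π l v step
  have mono' := path_mono π' l' v step'
  have h0 : l[0]'(by omega) = v := by
    rw [List.head?_eq_head hne0] at hhead
    rw [← Option.some.inj hhead]
    exact (List.head_eq_getElem hne0).symm
  have h0' : l'[0]'(by omega) = v := by
    rw [List.head?_eq_head hne0'] at hhead'
    rw [← Option.some.inj hhead']
    exact (List.head_eq_getElem hne0').symm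
  have hw : l'[j]'hjl' = l[j]'hjl := by
    have := hpref j le_rfl
    rw [List.getElem?_eq_getElem hjl, List.getElem?_eq_getElem hjl'] at this
    exact (Option.some.inj this).symm
  have hk : j + 1 < l.length := by
    by_contra hk
    have hlen : l.length = j + 1 := by omega
    have e1 : rotateAlong π l v = π (l[j]'hjl) := by
      rw [← h0, rot_zero π l nd (by omega)]
      exact congrArg π (gei (by omega) _)
    have e2 : rotateAlong π' l' v = π' (l'[l'.length - 1]'(by omega)) := by
      rw [← h0', rot_zero π' l' nd' (by omega)]
    have e12 : π (l[j]'hjl) = π' (l'[l'.length - 1]'(by omega)) := by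
      rw [← e1, heq, e2]
    by_cases hj' : j < l'.length - 1
    · have hlt := mono' j (l'.length - 1) hj' (by omega)
      rw [hw, ← e12] at hlt
      have hle := hrank
      have hlt2 := mono' j (l'.length - 1) hj' (by omega)
      rw [hw] at hlt2
      linarith [hlt2, e12.ge, hrank]
    · have hlen' : l'.length = j + 1 := by omega
      have hww : π' (l[j]'hjl) = π (l[j]'hjl) := by
        rw [e12, ← hw]
        exact congrArg π' (gei (by omega) _).symm
      have hll : l = l' := by
        apply List.ext_getElem (by omega)
        intro i h1 h2
        have := hpref i (by omega)
        rw [List.getElem?_eq_getElem h1, List.getElem?_eq_getElem h2] at this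
        exact Option.some.inj this
      subst hll
      apply hne
      funext x
      by_cases hx : x ∈ l
      · obtain ⟨i, hi, rfl⟩ := List.mem_iff_getElem.mp hx
        rcases Nat.eq_or_lt_of_le (Nat.le_of_lt_succ (hlen ▸ hi)) with hij | hij
        · subst hij
          exact hww.symm
        · have hi1 : i + 1 < l.length := by omega
          have c := congrFun heq (l[i+1]'hi1)
          rw [rot_mem π l nd (i+1) hi1 (by omega)] at c
          rw [rot_mem π' l nd (i+1) hi1 (by omega)] at c
          have : (i + 1 - 1) = i := by omega
          rw [congrArg π (gei this _), congrArg π' (gei this _)] at c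
          exact c
      · have c := congrFun heq x
        rw [rot_off π l x hx, rot_off π' l x hx] at c
        exact c
  refine ⟨hk, ?_⟩
  have ex : rotateAlong π l (l[j+1]'hk) = π (l[j]'hjl) := by
    rw [rot_mem π l nd (j+1) hk (by omega)]
    exact congrArg π (gei (by omega) _)
  have ex' : rotateAlong π' l' (l[j+1]'hk) = π (l[j]'hjl) := by
    rw [← heq]; exact ex
  by_cases hx : (l[j+1]'hk) ∈ l'
  · exfalso
    obtain ⟨m, hm, hxm⟩ := List.mem_iff_getElem.mp hx
    rcases Nat.eq_zero_or_pos m with hm0 | hmpos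
    · subst hm0
      have hv : v = l[j+1]'hk := by rw [← h0']; exact hxm
      have hlt := mono 0 (j+1) (by omega) hk
      rw [h0, hv] at hlt
      exact absurd hlt (lt_irrefl _)
    · have hrotx : rotateAlong π' l' (l[j+1]'hk) = π' (l'[m-1]'(by omega)) := by
        rw [← hxm, rot_mem π' l' nd' m hm (by omega)]
      have key : π' (l'[m-1]'(by omega)) = π (l[j]'hjl) := by
        rw [← hrotx, ex']
      rcases lt_trichotomy (m-1) j with h1 | h2 | h3
      · have hmj : m ≤ j := by omega
        have hpm := hpref m hmj
        have hmlen : m < l.length := by omega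
        rw [List.getElem?_eq_getElem hmlen, List.getElem?_eq_getElem hm] at hpm
        have hlm : l[m]'hmlen = l[j+1]'hk := by
          rw [Option.some.inj hpm]; exact hxm
        have hlt := mono m (j+1) (by omega) hk
        rw [hlm] at hlt
        exact absurd hlt (lt_irrefl _)
      · have hmj : m = j + 1 := by omega
        subst hmj
        exact hmax hk hm hxm.symm
      · have hlt := mono' j (m-1) h3 (by omega)
        rw [hw, key] at hlt
        linarith
  · have c := congrFun heq (l[j+1]'hk)
    rw [rot_off π' l' _ hx] at c
    rw [← c, ex]
end

section
/- If a graph contains a propagation path of length ℓ (with respect to deleting vertex v under permutation π), then its first ℓ − 1 vertices form a dependency path: a path x_1, ..., x_{ℓ−1} where for odd i, x_i ∈ LFMIS(G, π), and for even i, x_i ∉ LFMIS(G, π) and x_{i−1} is the eliminator of x_i. -/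
open scoped Classical

variable {V : Type*}

lemma lfmis_iff [Fintype V] (G : SimpleGraph V) (π : V → ℝ) (v : V) :
    lfmis G π v ↔ ∀ u, G.Adj u v → π u < π v → ¬ lfmis G π u := by
  conv_lhs => rw [lfmis]

lemma eliminator_eq [Fintype V] (G : SimpleGraph V) (π : V → ℝ)
    (hπ : Function.Injective π) (p u : V) (hp : p = u ∨ G.Adj p u)
    (hlf : lfmis G π p)
    (hmin : ∀ w, (w = u ∨ G.Adj w u) → lfmis G π w → π p ≤ π w) :
    eliminator G π u = p := by
  have hex : ∃ e, (e = u ∨ G.Adj e u) ∧ lfmis G π e ∧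
      ∀ w, (w = u ∨ G.Adj w u) → lfmis G π w → π e ≤ π w := ⟨p, hp, hlf, hmin⟩
  have hspec := hex.choose_spec
  rw [eliminator, dif_pos hex]
  exact hπ (le_antisymm (hspec.2.2 p hp hlf) (hmin _ hspec.1 hspec.2.1))

/-- The first `ℓ - 1` vertices of a propagation path of length `ℓ` form a
dependency path: consecutive vertices are adjacent, odd-indexed (1-based)
vertices are in `LFMIS(G, π)`, and even-indexed vertices are not in the LFMIS and
have their predecessor as eliminator.  (In 0-based indexing `j`: even `j` in the
LFMIS; odd `j` out, with `elim(w_j) = w_{j-1}`.) -/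
theorem propPath_prefix_is_dependency_path [Fintype V] (G : SimpleGraph V)
    (π : V → ℝ) (hπ : Function.Injective π) (v u : V) (l : List V)
    (hl : isPropPath G π v l u) :
    (l.take (l.length - 1)).Chain' G.Adj ∧
    ∀ j (hj : j < l.length - 1),
      (Even j → lfmis G π (l[j]'(by omega))) ∧
      (Odd j → ¬ lfmis G π (l[j]'(by omega)) ∧
        eliminator G π (l[j]'(by omega)) = l[j - 1]'(by omega)) := by
  obtain ⟨hne, hhead, -, -, hpar⟩ := hl
  have hlen0 : 0 < l.length := List.length_pos_iff.mpr hne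
  have h0 : l[0]'hlen0 = v := by
    rw [List.head?_eq_head hne, Option.some_inj] at hhead
    rw [List.getElem_zero]; exact hhead
  -- π is strictly increasing along the path
  have hmono : ∀ i j (_ : i < j) (hj : j < l.length),
      π (l[i]'(by omega)) < π (l[j]'hj) := by
    intro i j hij hj
    induction j with
    | zero => omega
    | succ k ih =>
      rcases Nat.lt_or_ge i k with h | h
      · exact (ih h (by omega)).trans (hpar k hj).2.2.1
      · have : i = k := by omega
        subst this
        exact (hpar i hj).2.2.1
  have hnev : ∀ j (hj : j < l.length), 0 < j → l[j]'hj ≠ v := by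
    intro j hj hj0 hEq
    have := hmono 0 j hj0 hj
    rw [h0, hEq] at this
    exact lt_irrefl _ this
  have hflip : ∀ j (hj : j + 1 < l.length), flippedDel G π v (l[j]'(by omega)) :=
    fun j hj => (hpar j hj).2.1
  -- v is in the LFMIS (when the path has at least two vertices)
  have hv : 1 < l.length → lfmis G π v := by
    intro h2
    have := hflip 0 h2
    rw [h0] at this
    rwa [flippedDel, if_pos rfl] at this
  -- flipped complement
  have hflip' : ∀ j (hj : j + 1 < l.length), 0 < j →
      (¬ lfmis G π (l[j]'(by omega)) ↔ lfmis (delV G v) π (l[j]'(by omega))) := by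
    intro j hj hj0
    have hf := hflip j hj
    rw [flippedDel, if_neg (hnev j (by omega) hj0)] at hf
    tauto
  -- alternation
  have key : ∀ j (hj : j < l.length - 1),
      (Even j → lfmis G π (l[j]'(by omega))) ∧
      (Odd j → ¬ lfmis G π (l[j]'(by omega))) := by
    intro j
    induction j with
    | zero =>
      intro hj
      refine ⟨fun _ => ?_, fun h => absurd h (by simp)⟩
      rw [h0]; exact hv (by omega)
    | succ k ih =>
      intro hj
      obtain ⟨ihe, iho⟩ := ih (by omega)
      have hP := hpar k (by omega)
      constructor
      · -- k+1 even, so k odd : use delV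
        intro hev
        have hk0 : 0 < k := by
          rcases Nat.eq_zero_or_pos k with h | h
          · subst h; simp at hev
          · exact h
        have hkodd : Odd k := by
          rcases Nat.even_or_odd k with h | h
          · exfalso; obtain ⟨a, ha⟩ := h; obtain ⟨b, hb⟩ := hev; omega
          · exact h
        have hkn : ¬ lfmis G π (l[k]'(by omega)) := iho hkodd
        have hkd : lfmis (delV G v) π (l[k]'(by omega)) :=
          (hflip' k (by omega) hk0).mp hkn
        by_contra hcon
        have hd : lfmis (delV G v) π (l[k+1]'(by omega)) :=
          (hflip' (k+1) (by omega) (by omega)).mp hcon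
        have hadj : (delV G v).Adj (l[k]'(by omega)) (l[k+1]'(by omega)) :=
          ⟨hP.1, hnev k (by omega) hk0, hnev (k+1) (by omega) (by omega)⟩
        exact (lfmis_iff _ _ _).mp hd _ hadj hP.2.2.1 hkd
      · -- k+1 odd, so k even : direct
        intro hodd
        have hkeven : Even k := by
          rcases Nat.even_or_odd k with h | h
          · exact h
          · exfalso; obtain ⟨a, ha⟩ := h; obtain ⟨b, hb⟩ := hodd; omega
        have hk : lfmis G π (l[k]'(by omega)) := ihe hkeven
        intro hcon
        exact (lfmis_iff _ _ _).mp hcon _ hP.1 hP.2.2.1 hk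
  refine ⟨?_, ?_⟩
  · apply List.IsChain.take
    rw [List.isChain_iff_getElem]
    intro i hi
    simpa [List.get_eq_getElem] using (hpar i (by omega)).1
  · intro j hj
    refine ⟨fun h => (key j hj).1 h, fun hodd => ?_⟩
    have hj1 : 0 < j := hodd.pos
    have hjn := (key j hj).2 hodd
    refine ⟨hjn, ?_⟩
    -- eliminator of l[j] is l[j-1]
    obtain ⟨k, rfl⟩ : ∃ k, j = k + 1 := ⟨j - 1, by omega⟩
    simp only [Nat.add_sub_cancel] at *
    have hjm : Even k := by
      obtain ⟨m, hm⟩ := hodd; exact ⟨m, by omega⟩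
    have hkin : lfmis G π (l[k]'(by omega)) := (key k (by omega)).1 hjm
    have hP := hpar k (by omega)
    have hjd : lfmis (delV G v) π (l[k+1]'(by omega)) :=
      (hflip' (k+1) (by omega) (by omega)).mp hjn
    refine eliminator_eq G π hπ _ _ (Or.inr hP.1) hkin ?_
    intro w hw hwlf
    by_contra hlt
    push_neg at hlt
    rcases hw with hw | hw
    · subst hw; exact hjn hwlf
    · by_cases hwf : flippedDel G π v w
      · exact absurd (hP.2.2.2 w hw hwf) (by linarith)
      · have hwv : w ≠ v := by
          intro h; subst h
          rw [flippedDel, if_pos rfl] at hwf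
          exact hwf (hv (by omega))
        have hwd : lfmis (delV G v) π w := by
          rw [flippedDel, if_neg hwv] at hwf
          push_neg at hwf
          exact hwf.mp hwlf
        have hadj : (delV G v).Adj w (l[k+1]'(by omega)) :=
          ⟨hw, hwv, hnev (k+1) (by omega) (by omega)⟩
        exact (lfmis_iff _ _ _).mp hjd w hadj (by linarith [hP.2.2.1]) hwd
end
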